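/- The distribution of saillance compositions in a shifted shuffle depends only on the saillance compositions of the operands: if SC(α) = SC(α') and SC(β) = SC(β'), then for every composition I, the number of permutations γ in the shifted shuffle of α and β with SC(γ) = I equals the number of permutations γ' in the shifted shuffle of α' and β' with SC(γ') = I. -/

import Mathlib

/-!
The partial sums of the saillance composition of a word are the positions of its
left-to-right maxima followed by its length, so SC and these positions determine each other.
The letter `a` of `w = u ++ a :: t` is a left-to-right maximum iff every letter of `u` is
below `a`. In a shifted shuffle, a small letter (`≤ p`) is a left-to-right maximum iff no large
letter precedes it and it is one in the subword of small letters; a large letter iff it is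
one in the subword of large letters. Hence relabelling the small letters by `α' α⁻¹` and the
large ones by `β' β⁻¹` keeps SC as soon as `SC α = SC α'` and `SC β = SC β'`, and it maps the
shuffle of `α` and `β` injectively into that of `α'` and `β'`; by symmetry the counts agree.
-/

open scoped Classical

/-- A word is *initially dominated* if its first letter is strictly greater
than all subsequent letters. -/
def initiallyDominated (w : List ℕ) : Prop :=
  w ≠ [] ∧ ∀ a ∈ w.tail, a < w.head!

/-- Positions (0-indexed) of the left-to-right maxima of a word. -/
def lrMaxPositions (w : List ℕ) : List ℕ :=
  (List.range w.length).filter (fun i => decide (∀ j < i, w[j]! < w[i]!))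

/-- The saillance composition of a word: gaps between consecutive
left-to-right maxima positions. -/
def SC (w : List ℕ) : List ℕ :=
  List.zipWith (fun a b => a - b) ((lrMaxPositions w).tail ++ [w.length]) (lrMaxPositions w)

/-- The word (one-line notation, values in {1,…,n}) of a permutation of {1,…,n}. -/
def permWord {n : ℕ} (σ : Equiv.Perm (Fin n)) : List ℕ :=
  List.ofFn (fun i => (σ i : ℕ) + 1)

/-- `w` occurs in the shifted shuffle of `u` (a word on {1,…,p}) and `v`
(whose letters get shifted by `p`): the subword of letters ≤ p is `u` and the
subword of letters > p is `v` shifted by `p`. -/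
def shiftedShuffleMem (p : ℕ) (u v w : List ℕ) : Prop :=
  w.filter (fun x => decide (x ≤ p)) = u ∧
    w.filter (fun x => decide (p < x)) = v.map (· + p)

theorem mem_lrMaxPositions {w : List ℕ} {i : ℕ} :
    i ∈ lrMaxPositions w ↔ ∃ h : i < w.length, ∀ x ∈ w.take i, x < w[i] := by
  simp only [lrMaxPositions, List.mem_filter, List.mem_range, decide_eq_true_eq,
    List.mem_take_iff_getElem]
  refine ⟨fun ⟨hi, h⟩ => ⟨hi, ?_⟩, fun ⟨hi, h⟩ => ⟨hi, fun j hj => ?_⟩⟩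
  · rintro _ ⟨j, hj, rfl⟩
    simpa [getElem!_pos, hi, show j < w.length by omega] using h j (by omega)
  · simpa [getElem!_pos, hi, show j < w.length by omega] using h w[j] ⟨j, by omega, rfl⟩

theorem pairwise_lt_lrMaxPositions (w : List ℕ) : (lrMaxPositions w).Pairwise (· < ·) :=
  List.pairwise_lt_range.filter _

theorem List.scanl_add_zipWith_sub {x e : ℕ} {L : List ℕ}
    (h : (x :: L ++ [e]).IsChain (· ≤ ·)) :
    (List.zipWith (· - ·) (L ++ [e]) (x :: L)).scanl (· + ·) x = x :: L ++ [e] := by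
  induction L generalizing x with
  | nil =>
    simp only [List.nil_append, List.cons_append, List.isChain_cons_cons] at h
    simp [Nat.add_sub_cancel' h.1]
  | cons y L ih =>
    simp only [List.cons_append, List.isChain_cons_cons] at h ih
    simp [Nat.add_sub_cancel' h.1, ih h.2]

theorem lrMaxPositions_cons_of_ne_nil {w : List ℕ} (hw : w ≠ []) :
    ∃ L, lrMaxPositions w = 0 :: L := by
  obtain ⟨n, hn⟩ := Nat.exists_eq_succ_of_ne_zero (List.length_pos_iff.mpr hw).ne'
  simp [lrMaxPositions, hn, List.range_succ_eq_map]

theorem isChain_lrMaxPositions_append_length (w : List ℕ) :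
    (lrMaxPositions w ++ [w.length]).IsChain (· ≤ ·) := by
  refine List.Pairwise.isChain (List.pairwise_append.mpr ⟨?_, by simp, ?_⟩)
  · exact (pairwise_lt_lrMaxPositions w).imp le_of_lt
  · intro i hi j hj
    simp only [lrMaxPositions, List.mem_filter, List.mem_range] at hi
    rw [List.mem_singleton] at hj
    omega

theorem scanl_SC (w : List ℕ) :
    (SC w).scanl (· + ·) 0 = lrMaxPositions w ++ [w.length] := by
  rcases eq_or_ne w [] with rfl | hw
  · simp [SC, lrMaxPositions]
  obtain ⟨L, hL⟩ := lrMaxPositions_cons_of_ne_nil hw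
  have := isChain_lrMaxPositions_append_length w
  rw [hL] at this
  rw [SC, hL, List.tail_cons, List.scanl_add_zipWith_sub this, List.cons_append]

theorem SC_eq_SC_iff {w w' : List ℕ} :
    SC w = SC w' ↔ lrMaxPositions w = lrMaxPositions w' ∧ w.length = w'.length := by
  refine ⟨fun h => ?_, fun ⟨hL, hl⟩ => by rw [SC, SC, hL, hl]⟩
  have := congrArg (List.scanl (· + ·) 0) h
  rw [scanl_SC, scanl_SC] at this
  simpa using List.append_inj' this rfl

def PreservesRecords (f : ℕ → ℕ) (w : List ℕ) : Prop :=
  ∀ u a t, w = u ++ a :: t → ((∀ x ∈ u, f x < f a) ↔ ∀ x ∈ u, x < a)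

theorem lrMaxPositions_map_eq_iff {f : ℕ → ℕ} {w : List ℕ} :
    lrMaxPositions (w.map f) = lrMaxPositions w ↔ PreservesRecords f w := by
  constructor
  · rintro h u a t rfl
    have := congrArg (u.length ∈ ·) h
    simpa [mem_lrMaxPositions, ← List.map_take, List.take_left'] using this
  · intro h
    refine (pairwise_lt_lrMaxPositions _).eq_of_mem_iff (pairwise_lt_lrMaxPositions _) fun i => ?_
    rw [mem_lrMaxPositions, mem_lrMaxPositions]
    simp only [List.length_map, List.getElem_map, ← List.map_take, List.forall_mem_map]
    exact exists_congr fun hi =>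
      h _ _ _ (by rw [List.getElem_cons_drop, List.take_append_drop])

theorem PreservesRecords.of_strictMono {f : ℕ → ℕ} (hf : StrictMono f) (w : List ℕ) :
    PreservesRecords f w := by
  intro u a t _
  simp [hf.lt_iff_lt]

theorem PreservesRecords.of_filter {f : ℕ → ℕ} {p : ℕ} (hf : ∀ x, f x ≤ p ↔ x ≤ p)
    {w : List ℕ} (hsmall : PreservesRecords f (w.filter (· ≤ p)))
    (hlarge : PreservesRecords f (w.filter (p < ·))) :
    PreservesRecords f w := by
  rintro u a t rfl
  by_cases ha : a ≤ p
  · have H := hsmall (u.filter (· ≤ p)) a (t.filter (· ≤ p)) (by simp [List.filter_append, ha])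
    simp only [List.mem_filter, decide_eq_true_eq, and_imp] at H
    have hfa := (hf a).mpr ha
    constructor
    · intro h x hx
      exact H.mp (fun y hy _ => h y hy) x hx ((hf x).mp ((h x hx).le.trans hfa))
    · intro h x hx
      exact H.mpr (fun y hy _ => h y hy) x hx (by have := h x hx; omega)
  · replace ha : p < a := by omega
    have H := hlarge (u.filter (p < ·)) a (t.filter (p < ·)) (by simp [List.filter_append, ha])
    simp only [List.mem_filter, decide_eq_true_eq, and_imp] at H
    have hfa : p < f a := by have := hf a; omega
    constructor
    · intro h x hx
      by_cases hx' : p < x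
      · exact H.mp (fun y hy _ => h y hy) x hx hx'
      · omega
    · intro h x hx
      by_cases hx' : p < x
      · exact H.mpr (fun y hy _ => h y hy) x hx hx'
      · have := hf x; omega

theorem SC_map_eq_SC_iff {f : ℕ → ℕ} {w : List ℕ} :
    SC (w.map f) = SC w ↔ PreservesRecords f w := by
  simp [SC_eq_SC_iff, lrMaxPositions_map_eq_iff]

theorem SC_map_add (w : List ℕ) (p : ℕ) : SC (w.map (· + p)) = SC w :=
  SC_map_eq_SC_iff.mpr (.of_strictMono (add_left_strictMono (a := p)) w)

theorem SC_map_eq_SC_of_filter {f : ℕ → ℕ} {p : ℕ} (hf : ∀ x, f x ≤ p ↔ x ≤ p) {w : List ℕ}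
    (hsmall : SC ((w.filter (· ≤ p)).map f) = SC (w.filter (· ≤ p)))
    (hlarge : SC ((w.filter (p < ·)).map f) = SC (w.filter (p < ·))) :
    SC (w.map f) = SC w :=
  SC_map_eq_SC_iff.mpr
    (.of_filter hf (SC_map_eq_SC_iff.mp hsmall) (SC_map_eq_SC_iff.mp hlarge))

def permOnLetters {n : ℕ} (σ : Equiv.Perm (Fin n)) (x : ℕ) : ℕ :=
  if h : 0 < x ∧ x ≤ n then (σ ⟨x - 1, by omega⟩ : ℕ) + 1 else x

theorem permOnLetters_val_add_one {n : ℕ} (σ : Equiv.Perm (Fin n)) (i : Fin n) :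
    permOnLetters σ (i + 1) = σ i + 1 := by
  simp [permOnLetters, Nat.succ_le_of_lt i.isLt]

theorem permWord_mul {n : ℕ} (σ γ : Equiv.Perm (Fin n)) :
    permWord (σ * γ) = (permWord γ).map (permOnLetters σ) := by
  simp [permWord, List.map_ofFn, Function.comp_def, permOnLetters_val_add_one]

theorem permOnLetters_le_iff {n p : ℕ} {σ : Equiv.Perm (Fin n)}
    (hσ : ∀ i, (σ i : ℕ) < p ↔ (i : ℕ) < p) (x : ℕ) :
    permOnLetters σ x ≤ p ↔ x ≤ p := by
  unfold permOnLetters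
  split_ifs with h
  · have := hσ ⟨x - 1, by omega⟩
    simp only at this
    omega
  · rfl

section Relabel

variable {p q : ℕ} (α α' : Equiv.Perm (Fin p)) (β β' : Equiv.Perm (Fin q))

def shuffleRelabel : Equiv.Perm (Fin (p + q)) :=
  finSumFinEquiv.permCongr ((α' * α⁻¹).sumCongr (β' * β⁻¹))

theorem shuffleRelabel_castAdd (a : Fin p) :
    shuffleRelabel α α' β β' (Fin.castAdd q a) = Fin.castAdd q (α' (α⁻¹ a)) := by
  simp [shuffleRelabel, Equiv.permCongr_apply, ← finSumFinEquiv_apply_left]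

theorem shuffleRelabel_natAdd (b : Fin q) :
    shuffleRelabel α α' β β' (Fin.natAdd p b) = Fin.natAdd p (β' (β⁻¹ b)) := by
  simp [shuffleRelabel, Equiv.permCongr_apply, ← finSumFinEquiv_apply_right]

theorem shuffleRelabel_lt_iff (i : Fin (p + q)) :
    (shuffleRelabel α α' β β' i : ℕ) < p ↔ (i : ℕ) < p := by
  induction i using Fin.addCases with
  | left a => simp [shuffleRelabel_castAdd]
  | right b => simp [shuffleRelabel_natAdd]

theorem permWord_map_shuffleRelabel_left :
    (permWord α).map (permOnLetters (shuffleRelabel α α' β β')) = permWord α' := by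
  simp only [permWord, List.map_ofFn, Function.comp_def]
  congr 1
  funext i
  rw [← Fin.val_castAdd q (α i), permOnLetters_val_add_one, shuffleRelabel_castAdd]
  simp

theorem permWord_map_shuffleRelabel_right :
    ((permWord β).map (· + p)).map (permOnLetters (shuffleRelabel α α' β β')) =
      (permWord β').map (· + p) := by
  simp only [permWord, List.map_ofFn, Function.comp_def]
  congr 1
  funext i
  rw [show (β i : ℕ) + 1 + p = (Fin.natAdd p (β i) : ℕ) + 1 by simp; omega,
    permOnLetters_val_add_one, shuffleRelabel_natAdd]
  simp; omega

end Relabel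

section Shuffle

variable {p q : ℕ} {α α' : Equiv.Perm (Fin p)} {β β' : Equiv.Perm (Fin q)}

theorem shiftedShuffleMem_shuffleRelabel_mul
    (hα : SC (permWord α) = SC (permWord α')) (hβ : SC (permWord β) = SC (permWord β'))
    {γ : Equiv.Perm (Fin (p + q))}
    (hγ : shiftedShuffleMem p (permWord α) (permWord β) (permWord γ)) :
    shiftedShuffleMem p (permWord α') (permWord β') (permWord (shuffleRelabel α α' β β' * γ)) ∧
      SC (permWord (shuffleRelabel α α' β β' * γ)) = SC (permWord γ) := by
  set f := permOnLetters (shuffleRelabel α α' β β')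
  have hf : ∀ x, f x ≤ p ↔ x ≤ p := permOnLetters_le_iff (shuffleRelabel_lt_iff α α' β β')
  have hsmall : ((permWord γ).filter (· ≤ p)).map f = permWord α' := by
    rw [hγ.1, permWord_map_shuffleRelabel_left]
  have hlarge : ((permWord γ).filter (p < ·)).map f = (permWord β').map (· + p) := by
    rw [hγ.2, permWord_map_shuffleRelabel_right]
  have map_filter_comm (P : ℕ → Prop) [DecidablePred P] (hP : ∀ x, P (f x) ↔ P x) :
      ((permWord γ).map f).filter P = ((permWord γ).filter P).map f := by
    rw [List.filter_map]
    congr 2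
    funext x
    simp [hP]
  rw [permWord_mul]
  refine ⟨⟨?_, ?_⟩, SC_map_eq_SC_of_filter hf ?_ ?_⟩
  · rw [map_filter_comm _ hf, hsmall]
  · rw [map_filter_comm _ fun x => by simpa using (hf x).not, hlarge]
  · rw [hsmall, hγ.1, hα]
  · rw [hlarge, hγ.2, SC_map_add, SC_map_add, hβ]

theorem card_shiftedShuffle_SC_le
    (hα : SC (permWord α) = SC (permWord α')) (hβ : SC (permWord β) = SC (permWord β'))
    (I : List ℕ) :
    (Finset.univ.filter (fun γ : Equiv.Perm (Fin (p + q)) =>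
        shiftedShuffleMem p (permWord α) (permWord β) (permWord γ) ∧
          SC (permWord γ) = I)).card ≤
    (Finset.univ.filter (fun γ : Equiv.Perm (Fin (p + q)) =>
        shiftedShuffleMem p (permWord α') (permWord β') (permWord γ) ∧
          SC (permWord γ) = I)).card := by
  refine Finset.card_le_card_of_injOn (shuffleRelabel α α' β β' * ·) ?_
    fun _ _ _ _ h => mul_left_cancel h
  intro γ hγ
  simp only [Finset.coe_filter, Finset.mem_univ, true_and, Set.mem_ofPred_eq] at hγ ⊢
  obtain ⟨hmem, hSC⟩ := shiftedShuffleMem_shuffleRelabel_mul hα hβ hγ.1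
  exact ⟨hmem, hSC.trans hγ.2⟩

end Shuffle

/-- The distribution of saillance compositions in a shifted shuffle depends
only on the saillance compositions of the two operands. -/
theorem stmt7 (p q : ℕ) (α α' : Equiv.Perm (Fin p)) (β β' : Equiv.Perm (Fin q))
    (hα : SC (permWord α) = SC (permWord α')) (hβ : SC (permWord β) = SC (permWord β'))
    (I : List ℕ) :
    (Finset.univ.filter (fun γ : Equiv.Perm (Fin (p + q)) =>
        shiftedShuffleMem p (permWord α) (permWord β) (permWord γ) ∧
          SC (permWord γ) = I)).card =
    (Finset.univ.filter (fun γ : Equiv.Perm (Fin (p + q)) =>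
        shiftedShuffleMem p (permWord α') (permWord β') (permWord γ) ∧
          SC (permWord γ) = I)).card :=
  le_antisymm (card_shiftedShuffle_SC_le hα hβ I)
    (card_shiftedShuffle_SC_le hα.symm hβ.symm I)
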